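/- The soft maximum is monotone in λ: for a finite nonempty set K with uniform weights and values a : K → ℝ, the function λ ↦ (1/λ) log((1/r) ∑_k exp(λ a_k)) is monotone nondecreasing on (0, ∞). -/

import Mathlib

/-- The soft maximum is monotone nondecreasing in `λ` on `(0,∞)`: for a finite
nonempty set `K` with `r = |K|` and values `a : K → ℝ`,
`λ ↦ (1/λ) log((1/r) ∑_k exp(λ a_k))` is monotone on positive reals. -/
theorem softmax_monotone {K : Type*} [Fintype K] [Nonempty K] (a : K → ℝ)
    (lam₁ lam₂ : ℝ) (h₁ : 0 < lam₁) (h₁₂ : lam₁ ≤ lam₂) :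
    (1 / lam₁) * Real.log ((1 / (Fintype.card K : ℝ)) * ∑ k, Real.exp (lam₁ * a k))
      ≤ (1 / lam₂) * Real.log ((1 / (Fintype.card K : ℝ)) * ∑ k, Real.exp (lam₂ * a k)) := by
  have h₂ : 0 < lam₂ := h₁.trans_le h₁₂
  have hr : (0 : ℝ) < (Fintype.card K : ℝ) := by
    exact_mod_cast Fintype.card_pos
  set S₁ := (1 / (Fintype.card K : ℝ)) * ∑ k, Real.exp (lam₁ * a k) with hS₁
  set S₂ := (1 / (Fintype.card K : ℝ)) * ∑ k, Real.exp (lam₂ * a k) with hS₂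
  have hS₁pos : 0 < S₁ := by
    apply mul_pos (by positivity)
    exact Finset.sum_pos (fun k _ => Real.exp_pos _) Finset.univ_nonempty
  have hp : 1 ≤ lam₂ / lam₁ := (one_le_div h₁).2 h₁₂
  have key : S₁ ^ (lam₂ / lam₁) ≤ S₂ := by
    have h := Real.rpow_arith_mean_le_arith_mean_rpow Finset.univ
      (fun _ : K => 1 / (Fintype.card K : ℝ)) (fun k => Real.exp (lam₁ * a k))
      (fun i _ => by positivity)
      (by
        rw [Finset.sum_const, Finset.card_univ, nsmul_eq_mul, mul_one_div,
          div_self hr.ne'])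
      (fun i _ => (Real.exp_pos _).le) hp
    rw [← Finset.mul_sum, ← Finset.mul_sum] at h
    calc S₁ ^ (lam₂ / lam₁) ≤ (1 / (Fintype.card K : ℝ)) *
          ∑ k, Real.exp (lam₁ * a k) ^ (lam₂ / lam₁) := h
      _ = S₂ := by
          rw [hS₂]
          congr 1
          refine Finset.sum_congr rfl fun k _ => ?_
          rw [← Real.exp_mul]
          congr 1
          field_simp
  have hlog : (lam₂ / lam₁) * Real.log S₁ ≤ Real.log S₂ := by
    have h := Real.log_le_log (by positivity) key
    rwa [Real.log_rpow hS₁pos] at h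
  calc (1 / lam₁) * Real.log S₁
      = (1 / lam₂) * ((lam₂ / lam₁) * Real.log S₁) := by field_simp
    _ ≤ (1 / lam₂) * Real.log S₂ :=
        mul_le_mul_of_nonneg_left hlog (by positivity)
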